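/- Let α ∈ (0,1), β > 0 and a₂ > a₁ > 0, b₂ ≥ b₁ ≥ 0 satisfy a₂b₁ = a₁b₂ (restriction (T1)) and the strict inequality a₂ > 2b₂·cosh(βπ/2)·√(1 + cot²(απ/2)·tanh²(βπ/2)) (strict restriction (T2₂)). Then for every fixed s₀ ≥ 0 there exists p₀ > 0 such that for all p > p₀, with s = s₀ + ip, Im P(s)·Re Q(s) − Re P(s)·Im Q(s) > 0. (In particular, wherever Q(s) ≠ 0, Im Ẽ(s) > 0 and hence Im M²(s) < 0 for M²(s) = Q(s)/P(s).) -/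

import Mathlib

/-!
Write `s = e^{L + iθ}`. Since `s^{α+iβ} + s^{α-iβ} = 2 s^α cos(β log s)`, and (T1) makes the
cross terms of `Im (P(s) · conj Q(s))` cancel,
`Im P·Re Q - Re P·Im Q = (a₂ - a₁) Im s^α + 2 (b₂ - b₁) Im (s^α cos(β log s))`.
Bounding the oscillation in `βL` by its amplitude gives the lower bound
`e^{αL} ((a₂ - a₁) sin(αθ) - 2 (b₂ - b₁) A(θ))` with
`A(θ) = √(sin²(αθ) cosh²(βθ) + cos²(αθ) sinh²(βθ))`. As `p → ∞` the argument `θ` of `s₀ + ip`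
tends to `π/2`, where `A(π/2) = sin(απ/2) · Ccot α β`, so the bracket tends to
`sin(απ/2) ((a₂ - a₁) - 2 (b₂ - b₁) Ccot α β)`, which is positive by (T1) and strict (T2₂).
-/

/-- `φ_{a,b}(s) = 1 + a·s^α + b·(s^{α+iβ} + s^{α−iβ})`, with principal complex powers. -/
noncomputable def phi (α β a b : ℝ) (s : ℂ) : ℂ :=
  1 + (a : ℂ) * s ^ (α : ℂ) +
    (b : ℂ) * (s ^ ((α : ℂ) + Complex.I * (β : ℂ)) + s ^ ((α : ℂ) - Complex.I * (β : ℂ)))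

/-- The constant `cosh(βπ/2)·√(1 + cot²(απ/2)·tanh²(βπ/2))` appearing in restrictions (T2). -/
noncomputable def Ccot (α β : ℝ) : ℝ :=
  Real.cosh (β * (Real.pi / 2)) *
    Real.sqrt (1 + (Real.cot (α * (Real.pi / 2)) * Real.tanh (β * (Real.pi / 2))) ^ 2)

open Filter Topology Complex

theorem im_mul_re_sub_re_mul_im_of_mul_eq_mul (F G : ℂ) {a₁ a₂ b₁ b₂ : ℝ}
    (h : a₂ * b₁ = a₁ * b₂) :
    (1 + a₂ * F + b₂ * G).im * (1 + a₁ * F + b₁ * G).re -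
        (1 + a₂ * F + b₂ * G).re * (1 + a₁ * F + b₁ * G).im =
      (a₂ - a₁) * F.im + (b₂ - b₁) * G.im := by
  simp only [add_re, add_im, mul_re, mul_im, one_re, one_im, ofReal_re, ofReal_im]
  linear_combination (F.im * G.re - F.re * G.im) * h

theorem cpow_add_I_mul_add_cpow_sub_I_mul {s : ℂ} (hs : s ≠ 0) (α β : ℝ) :
    s ^ ((α : ℂ) + I * β) + s ^ ((α : ℂ) - I * β) = 2 * s ^ (α : ℂ) * cos (β * log s) := by
  simp only [cpow_def_of_ne_zero hs, cos, mul_add, mul_sub, exp_add, exp_sub, neg_mul, exp_neg]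
  ring_nf

theorem ofReal_mul_log (s : ℂ) (β : ℝ) :
    (β : ℂ) * log s = ((β * Real.log ‖s‖ : ℝ) : ℂ) + ((β * arg s : ℝ) : ℂ) * I := by
  apply Complex.ext <;> simp [log_re, log_im]

theorem cos_ofReal_mul_log_re (s : ℂ) (β : ℝ) :
    (cos (β * log s)).re = Real.cos (β * Real.log ‖s‖) * Real.cosh (β * arg s) := by
  rw [ofReal_mul_log, cos_add_mul_I]
  simp only [sub_re, mul_re, mul_im, I_re, I_im, cos_ofReal_re, cos_ofReal_im, sin_ofReal_re,
    sin_ofReal_im, cosh_ofReal_re, cosh_ofReal_im, sinh_ofReal_re, sinh_ofReal_im]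
  ring

theorem cos_ofReal_mul_log_im (s : ℂ) (β : ℝ) :
    (cos (β * log s)).im = -(Real.sin (β * Real.log ‖s‖) * Real.sinh (β * arg s)) := by
  rw [ofReal_mul_log, cos_add_mul_I]
  simp only [sub_im, mul_re, mul_im, I_re, I_im, cos_ofReal_re, cos_ofReal_im, sin_ofReal_re,
    sin_ofReal_im, cosh_ofReal_re, cosh_ofReal_im, sinh_ofReal_re, sinh_ofReal_im]
  ring

theorem Real.neg_sqrt_le_mul_cos_add_mul_sin (u v x : ℝ) :
    -√(u ^ 2 + v ^ 2) ≤ u * Real.cos x + v * Real.sin x := by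
  refine neg_le_of_abs_le (Real.abs_le_sqrt ?_)
  nlinarith [Real.sin_sq_add_cos_sq x, sq_nonneg (u * Real.sin x - v * Real.cos x)]

/-- The amplitude of `L ↦ Im (e^{iαθ} cos(β (L + iθ)))`. -/
noncomputable def oscAmplitude (α β θ : ℝ) : ℝ :=
  √((Real.sin (α * θ) * Real.cosh (β * θ)) ^ 2 + (Real.cos (α * θ) * Real.sinh (β * θ)) ^ 2)

theorem continuous_oscAmplitude (α β : ℝ) : Continuous (oscAmplitude α β) := by
  unfold oscAmplitude
  fun_prop

theorem sin_mul_pi_div_two_pos {α : ℝ} (hα : α ∈ Set.Ioo (0 : ℝ) 1) :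
    0 < Real.sin (α * (Real.pi / 2)) :=
  Real.sin_pos_of_pos_of_lt_pi (mul_pos hα.1 (by positivity)) (by nlinarith [hα.2, Real.pi_pos])

theorem oscAmplitude_pi_div_two {α : ℝ} (hα : α ∈ Set.Ioo (0 : ℝ) 1) (β : ℝ) :
    oscAmplitude α β (Real.pi / 2) = Real.sin (α * (Real.pi / 2)) * Ccot α β := by
  have hsin := sin_mul_pi_div_two_pos hα
  have hcosh := Real.cosh_pos (β * (Real.pi / 2))
  have hradicand :
      (Real.sin (α * (Real.pi / 2)) * Real.cosh (β * (Real.pi / 2))) ^ 2 +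
          (Real.cos (α * (Real.pi / 2)) * Real.sinh (β * (Real.pi / 2))) ^ 2 =
        (Real.sin (α * (Real.pi / 2)) * Real.cosh (β * (Real.pi / 2))) ^ 2 *
          (1 + (Real.cot (α * (Real.pi / 2)) * Real.tanh (β * (Real.pi / 2))) ^ 2) := by
    rw [Real.cot_eq_cos_div_sin, Real.tanh_eq_sinh_div_cosh]
    generalize Real.sin (α * (Real.pi / 2)) = S at hsin ⊢
    generalize Real.cosh (β * (Real.pi / 2)) = C at hcosh ⊢
    field_simp
  rw [oscAmplitude, hradicand, Real.sqrt_mul (sq_nonneg _), Real.sqrt_sq (by positivity), Ccot]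
  ring

theorem neg_two_mul_oscAmplitude_le_im {s : ℂ} (hs : s ≠ 0) (α β : ℝ) :
    -(2 * ‖s‖ ^ α * oscAmplitude α β (arg s)) ≤
      (s ^ ((α : ℂ) + I * β) + s ^ ((α : ℂ) - I * β)).im := by
  rw [cpow_add_I_mul_add_cpow_sub_I_mul hs, mul_assoc (2 : ℂ), ← ofReal_ofNat, im_ofReal_mul,
    mul_im, cpow_ofReal_re, cpow_ofReal_im, cos_ofReal_mul_log_re, cos_ofReal_mul_log_im,
    oscAmplitude]
  have hosc := Real.neg_sqrt_le_mul_cos_add_mul_sin (Real.sin (α * arg s) * Real.cosh (β * arg s))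
    (-(Real.cos (α * arg s) * Real.sinh (β * arg s))) (β * Real.log ‖s‖)
  rw [neg_sq] at hosc
  have hpow : 0 ≤ ‖s‖ ^ α := by positivity
  rw [mul_comm (arg s) α]
  nlinarith [mul_le_mul_of_nonneg_left hosc hpow]

noncomputable def crossLowerBound (α β A B θ : ℝ) : ℝ :=
  A * Real.sin (α * θ) - 2 * B * oscAmplitude α β θ

theorem continuous_crossLowerBound (α β A B : ℝ) : Continuous (crossLowerBound α β A B) := by
  unfold crossLowerBound
  have := continuous_oscAmplitude α β
  fun_prop

theorem crossLowerBound_pi_div_two_pos {α β a₁ a₂ b₁ b₂ : ℝ} (hα : α ∈ Set.Ioo (0 : ℝ) 1)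
    (ha₂ : 0 < a₂) (ha : a₁ < a₂) (hT1 : a₂ * b₁ = a₁ * b₂) (hT2s : a₂ > 2 * b₂ * Ccot α β) :
    0 < crossLowerBound α β (a₂ - a₁) (b₂ - b₁) (Real.pi / 2) := by
  have hfactor : a₂ * (a₂ - a₁ - 2 * (b₂ - b₁) * Ccot α β) =
      (a₂ - a₁) * (a₂ - 2 * b₂ * Ccot α β) := by
    linear_combination 2 * Ccot α β * hT1
  have hgap : 0 < a₂ - a₁ - 2 * (b₂ - b₁) * Ccot α β :=
    pos_of_mul_pos_right (hfactor ▸ mul_pos (sub_pos.2 ha) (sub_pos.2 hT2s)) ha₂.le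
  rw [crossLowerBound, oscAmplitude_pi_div_two hα]
  nlinarith [mul_pos (sin_mul_pi_div_two_pos hα) hgap]

theorem mul_crossLowerBound_le_phi_cross {α β a₁ a₂ b₁ b₂ : ℝ} {s : ℂ} (hs : s ≠ 0)
    (hb : b₁ ≤ b₂) (hT1 : a₂ * b₁ = a₁ * b₂) :
    ‖s‖ ^ α * crossLowerBound α β (a₂ - a₁) (b₂ - b₁) (arg s) ≤
      (phi α β a₂ b₂ s).im * (phi α β a₁ b₁ s).re -
        (phi α β a₂ b₂ s).re * (phi α β a₁ b₁ s).im := by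
  rw [crossLowerBound, phi, phi, im_mul_re_sub_re_mul_im_of_mul_eq_mul _ _ hT1, cpow_ofReal_im,
    mul_comm (arg s) α]
  nlinarith [mul_le_mul_of_nonneg_left (neg_two_mul_oscAmplitude_le_im hs α β)
    (sub_nonneg.2 hb)]

theorem tendsto_arg_add_I_mul_atTop (s₀ : ℝ) :
    Tendsto (fun p : ℝ => arg (s₀ + I * p)) atTop (𝓝 (Real.pi / 2)) := by
  have hI : Tendsto (fun p : ℝ => ((s₀ / p : ℝ) : ℂ) + I) atTop (𝓝 I) := by
    have h : Tendsto (fun p : ℝ => s₀ / p) atTop (𝓝 0) := tendsto_const_nhds.div_atTop tendsto_id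
    simpa using (continuous_ofReal.tendsto 0 |>.comp h).add_const I
  have harg : ContinuousAt arg I := continuousAt_arg (by simp [slitPlane])
  refine (arg_I ▸ harg.tendsto.comp hI).congr' ?_
  filter_upwards [eventually_gt_atTop 0] with p hp
  have hscale : (s₀ : ℂ) + I * p = (p : ℂ) * (((s₀ / p : ℝ) : ℂ) + I) := by
    push_cast
    rw [mul_add, mul_div_cancel₀ _ (ofReal_ne_zero.2 hp.ne')]
    ring
  rw [Function.comp_apply, hscale, arg_real_mul _ hp]

theorem stmt_15_general (α β a₁ a₂ b₁ b₂ : ℝ) (hα : α ∈ Set.Ioo (0:ℝ) 1)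
    (ha₁ : 0 < a₁) (ha : a₁ < a₂) (hb : b₁ ≤ b₂)
    (hT1 : a₂ * b₁ = a₁ * b₂) (hT2s : a₂ > 2 * b₂ * Ccot α β) :
    ∀ s₀ : ℝ, 0 ≤ s₀ → ∃ p₀ : ℝ, 0 < p₀ ∧ ∀ p : ℝ, p₀ < p →
      0 < (phi α β a₂ b₂ ((s₀ : ℂ) + Complex.I * (p : ℂ))).im *
            (phi α β a₁ b₁ ((s₀ : ℂ) + Complex.I * (p : ℂ))).re -
          (phi α β a₂ b₂ ((s₀ : ℂ) + Complex.I * (p : ℂ))).re *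
            (phi α β a₁ b₁ ((s₀ : ℂ) + Complex.I * (p : ℂ))).im ∧
      (phi α β a₁ b₁ ((s₀ : ℂ) + Complex.I * (p : ℂ)) ≠ 0 →
        0 < (phi α β a₂ b₂ ((s₀ : ℂ) + Complex.I * (p : ℂ)) /
              phi α β a₁ b₁ ((s₀ : ℂ) + Complex.I * (p : ℂ))).im) ∧
      (phi α β a₂ b₂ ((s₀ : ℂ) + Complex.I * (p : ℂ)) ≠ 0 →
        (phi α β a₁ b₁ ((s₀ : ℂ) + Complex.I * (p : ℂ)) /
          phi α β a₂ b₂ ((s₀ : ℂ) + Complex.I * (p : ℂ))).im < 0) := by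
  intro s₀ _
  have hlim : Tendsto (fun p : ℝ => crossLowerBound α β (a₂ - a₁) (b₂ - b₁) (arg (s₀ + I * p)))
      atTop (𝓝 (crossLowerBound α β (a₂ - a₁) (b₂ - b₁) (Real.pi / 2))) :=
    ((continuous_crossLowerBound α β _ _).tendsto _).comp (tendsto_arg_add_I_mul_atTop s₀)
  have hbound := crossLowerBound_pi_div_two_pos hα (ha₁.trans ha) ha hT1 hT2s
  obtain ⟨N, hN⟩ :=
    eventually_atTop.1 ((eventually_gt_atTop 0).and (hlim.eventually_const_lt hbound))
  refine ⟨max N 1, lt_max_of_lt_right one_pos, fun p hp => ?_⟩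
  obtain ⟨hp₀, hpos⟩ := hN p (le_max_left N 1 |>.trans hp.le)
  have hs : (s₀ : ℂ) + I * p ≠ 0 := fun h => by simpa [hp₀.ne'] using congrArg im h
  have hcross :=
    (mul_pos (by positivity) hpos).trans_le (mul_crossLowerBound_le_phi_cross hs hb hT1)
  refine ⟨hcross, fun hQ => ?_, fun hP => ?_⟩
  · rw [div_im, div_sub_div_same]
    exact div_pos hcross (normSq_pos.2 hQ)
  · rw [div_im, div_sub_div_same]
    exact div_neg_of_neg_of_pos (by linarith) (normSq_pos.2 hP)

/-- Under `a₂ > a₁ > 0`, `b₂ ≥ b₁ ≥ 0`, (T1) and the strict restriction (T2₂):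
for every `s₀ ≥ 0` there is `p₀ > 0` such that for all `p > p₀`, with `s = s₀ + ip`,
`Im P(s)·Re Q(s) − Re P(s)·Im Q(s) > 0`; in particular, wherever `Q(s) ≠ 0`,
`Im Ẽ(s) > 0` and hence `Im M²(s) < 0` for `M² = Q/P` (wherever `P(s) ≠ 0`). -/
theorem stmt_15 (α β a₁ a₂ b₁ b₂ : ℝ) (hα : α ∈ Set.Ioo (0:ℝ) 1) (hβ : 0 < β)
    (ha₁ : 0 < a₁) (ha : a₁ < a₂) (hb₁ : 0 ≤ b₁) (hb : b₁ ≤ b₂)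
    (hT1 : a₂ * b₁ = a₁ * b₂) (hT2s : a₂ > 2 * b₂ * Ccot α β) :
    ∀ s₀ : ℝ, 0 ≤ s₀ → ∃ p₀ : ℝ, 0 < p₀ ∧ ∀ p : ℝ, p₀ < p →
      0 < (phi α β a₂ b₂ ((s₀ : ℂ) + Complex.I * (p : ℂ))).im *
            (phi α β a₁ b₁ ((s₀ : ℂ) + Complex.I * (p : ℂ))).re -
          (phi α β a₂ b₂ ((s₀ : ℂ) + Complex.I * (p : ℂ))).re *
            (phi α β a₁ b₁ ((s₀ : ℂ) + Complex.I * (p : ℂ))).im ∧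
      (phi α β a₁ b₁ ((s₀ : ℂ) + Complex.I * (p : ℂ)) ≠ 0 →
        0 < (phi α β a₂ b₂ ((s₀ : ℂ) + Complex.I * (p : ℂ)) /
              phi α β a₁ b₁ ((s₀ : ℂ) + Complex.I * (p : ℂ))).im) ∧
      (phi α β a₂ b₂ ((s₀ : ℂ) + Complex.I * (p : ℂ)) ≠ 0 →
        (phi α β a₁ b₁ ((s₀ : ℂ) + Complex.I * (p : ℂ)) /
          phi α β a₂ b₂ ((s₀ : ℂ) + Complex.I * (p : ℂ))).im < 0) :=
  stmt_15_general α β a₁ a₂ b₁ b₂ hα ha₁ ha hb hT1 hT2s
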